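/- arXiv:1411.2176 — 5 statements merged into one kernel-verified Lean document; each statement's English description precedes it below -/
import Mathlib

section
/- Let M be a module over a commutative ring and let M_1, ..., M_N be submodules of M satisfying condition (⋆): for every pair of subsets I, T ⊆ {1,...,N}, (⋂_{i∈I} M_i) ∩ (∑_{i∈T} M_i) = ∑_{i∈T} ((⋂_{i∈I} M_i) ∩ M_i). Then the family N_i := M_i ∩ M_N (for i = 1,...,N-1) of submodules of M_N also satisfies condition (⋆), i.e., for all I, T ⊆ {1,...,N-1}, (⋂_{i∈I∪{N}} M_i) ∩ (∑_{i∈T} (M_i ∩ M_N)) = ∑_{i∈T} ((⋂_{i∈I∪{N}} M_i) ∩ M_i). -/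
/-- If submodules `M₁, …, M_N` of `M` satisfy the distributivity condition (⋆), then the
family `M_i ∩ M_N` (for `i = 1, …, N-1`) of submodules of `M_N` also satisfies (⋆):
for all `I, T ⊆ {1,…,N-1}`,
`(⋂_{i ∈ I∪{N}} M_i) ∩ (∑_{i∈T} (M_i ∩ M_N)) = ∑_{i∈T} ((⋂_{i∈I∪{N}} M_i) ∩ M_i)`. -/
theorem stmt_1 (S : Type) [CommRing S] (M : Type) [AddCommGroup M] [Module S M]
    (n : ℕ) (Msub : Fin (n + 1) → Submodule S M)
    (hstar : ∀ I T : Finset (Fin (n + 1)),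
      (⨅ i ∈ I, Msub i) ⊓ (⨆ i ∈ T, Msub i) = ⨆ i ∈ T, ((⨅ j ∈ I, Msub j) ⊓ Msub i)) :
    ∀ I T : Finset (Fin n),
      ((⨅ i ∈ I, Msub i.castSucc) ⊓ Msub (Fin.last n)) ⊓
          (⨆ i ∈ T, (Msub i.castSucc ⊓ Msub (Fin.last n))) =
        ⨆ i ∈ T, (((⨅ j ∈ I, Msub j.castSucc) ⊓ Msub (Fin.last n)) ⊓ Msub i.castSucc) := by
  intro I T
  have hinj : Function.Injective (Fin.castSucc : Fin n → Fin (n + 1)) :=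
    Fin.castSucc_injective n
  have key := hstar (insert (Fin.last n) (I.image Fin.castSucc)) (T.image Fin.castSucc)
  have hI : (⨅ i ∈ insert (Fin.last n) (I.image Fin.castSucc), Msub i)
      = (⨅ i ∈ I, Msub i.castSucc) ⊓ Msub (Fin.last n) := by
    rw [Finset.iInf_insert, Finset.iInf_finset_image]
    exact inf_comm _ _
  have hT : (⨆ i ∈ T.image Fin.castSucc, Msub i) = ⨆ i ∈ T, Msub i.castSucc := by
    rw [Finset.iSup_finset_image]
  have hR : (⨆ i ∈ T.image Fin.castSucc,
        ((⨅ j ∈ insert (Fin.last n) (I.image Fin.castSucc), Msub j) ⊓ Msub i))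
      = ⨆ i ∈ T, (((⨅ j ∈ I, Msub j.castSucc) ⊓ Msub (Fin.last n)) ⊓ Msub i.castSucc) := by
    rw [Finset.iSup_finset_image]
    simp_rw [hI]
  rw [hR, hI, hT] at key
  refine le_antisymm ?_ ?_
  · calc ((⨅ i ∈ I, Msub i.castSucc) ⊓ Msub (Fin.last n)) ⊓
          (⨆ i ∈ T, (Msub i.castSucc ⊓ Msub (Fin.last n)))
        ≤ ((⨅ i ∈ I, Msub i.castSucc) ⊓ Msub (Fin.last n)) ⊓ (⨆ i ∈ T, Msub i.castSucc) := by
          gcongr with i hi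
          exact inf_le_left
      _ = _ := key
  · refine iSup₂_le fun i hi => le_inf inf_le_left ?_
    have h1 : ((⨅ j ∈ I, Msub j.castSucc) ⊓ Msub (Fin.last n)) ⊓ Msub i.castSucc
        ≤ Msub i.castSucc ⊓ Msub (Fin.last n) :=
      le_inf inf_le_right (inf_le_left.trans inf_le_right)
    exact h1.trans (le_iSup₂ (f := fun (i : Fin n) (_ : i ∈ T) => Msub i.castSucc ⊓ Msub (Fin.last n)) i hi)
end

section
/- Let R = k[s,t] be a polynomial ring in two variables over a field of characteristic 0, and let p, q, r be positive integers with p + q − r ≥ 2 and p + r − q ≤ 1. Write t^q = f·s^p + g·(s+t)^r with f, g ∈ R where no term of g is divisible by s^p. Then the colon ideal I = ⟨s^p, t^q⟩ : (s+t)^r equals ⟨s^p, g⟩, and s^p and g are relatively prime (in particular I is a complete intersection generated in degrees min{p, q−r} and max{p, q−r}). -/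
/-!
Substituting `t^q = f s^p + g (s+t)^r` shows `h (s+t)^r ∈ ⟨s^p, t^q⟩` iff
`(h - b g)(s+t)^r ∈ ⟨s^p⟩` for some `b`, and since `s^p` is coprime to `(s+t)^r` this says
`h ∈ ⟨s^p, g⟩`. Coprimality of `s^p` with `(s+t)^r` and with `g` both come from the prime `s`
not dividing `t`: it would otherwise divide `t^q = f s^p + g (s+t)^r`.
-/

open MvPolynomial

namespace Ideal

variable {R : Type*} [CommRing R] [DecompositionMonoid R]

theorem colon_span_pair_span_singleton {a b u f g : R} (hb : b = f * a + g * u)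
    (hau : IsRelPrime a u) :
    (span {a, b}).colon (span {u}) = span {a, g} := by
  apply le_antisymm
  · intro h hh
    obtain ⟨c, d, hcd⟩ := mem_span_pair.mp (mem_colon_span_singleton.mp hh)
    have hdvd : a ∣ h - d * g :=
      hau.dvd_of_dvd_mul_right ⟨c + d * f, by linear_combination -hcd + d * hb⟩
    obtain ⟨e, he⟩ := hdvd
    exact mem_span_pair.mpr ⟨e, d, by linear_combination -he⟩
  · rw [span_le]
    rintro x (rfl | rfl) <;> rw [SetLike.mem_coe, mem_colon_span_singleton, mem_span_pair]
    · exact ⟨u, 0, by ring⟩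
    · exact ⟨-f, 1, by linear_combination hb⟩

end Ideal

section Prime

variable {R : Type*} [CommRing R] [IsDomain R] [DecompositionMonoid R] {s t : R}

theorem isRelPrime_pow_add_pow (hs : Prime s) (hst : ¬ s ∣ t) (p r : ℕ) :
    IsRelPrime (s ^ p) ((s + t) ^ r) :=
  ((hs.irreducible.isRelPrime_iff_not_dvd.mpr fun h ↦
    hst ((dvd_add_right dvd_rfl).mp h)).pow_left).pow_right

theorem isRelPrime_pow_of_pow_eq_add (hs : Prime s) (hst : ¬ s ∣ t) {p q r : ℕ} (hp : 0 < p)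
    {f g : R} (hfg : t ^ q = f * s ^ p + g * (s + t) ^ r) : IsRelPrime (s ^ p) g := by
  refine (hs.irreducible.isRelPrime_iff_not_dvd.mpr fun hsg ↦ hst ?_).pow_left
  apply hs.dvd_of_dvd_pow (n := q)
  rw [hfg]
  exact dvd_add (dvd_mul_of_dvd_right (dvd_pow_self s hp.ne') f) (dvd_mul_of_dvd_left hsg _)

end Prime

theorem stmt_7_general (k : Type) [Field k] (p q r : ℕ)
    (hp : 0 < p)
    (f g : MvPolynomial (Fin 2) k)
    (hfg : (X 1 : MvPolynomial (Fin 2) k) ^ q = f * X 0 ^ p + g * (X 0 + X 1) ^ r) :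
    (Ideal.span {(X 0 : MvPolynomial (Fin 2) k) ^ p, X 1 ^ q}).colon
        (Ideal.span {(X 0 + X 1 : MvPolynomial (Fin 2) k) ^ r}) =
      Ideal.span {(X 0 : MvPolynomial (Fin 2) k) ^ p, g} ∧
    IsRelPrime ((X 0 : MvPolynomial (Fin 2) k) ^ p) g := by
  have hs : Prime (X 0 : MvPolynomial (Fin 2) k) := X_prime
  have hst : ¬ (X 0 : MvPolynomial (Fin 2) k) ∣ X 1 := by simp
  exact ⟨Ideal.colon_span_pair_span_singleton hfg (isRelPrime_pow_add_pow hs hst p r),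
    isRelPrime_pow_of_pow_eq_add hs hst hp hfg⟩

/-- In `R = k[s,t]` (char 0), with `p + q − r ≥ 2` and `p + r − q ≤ 1`, writing
`t^q = f·s^p + g·(s+t)^r` where no term of `g` is divisible by `s^p`, the colon ideal
`I = ⟨s^p, t^q⟩ : (s+t)^r` equals `⟨s^p, g⟩`, and `s^p` and `g` are relatively prime. -/
theorem stmt_7 (k : Type) [Field k] [CharZero k] (p q r : ℕ)
    (hp : 0 < p) (hq : 0 < q) (hr : 0 < r)
    (h1 : r + 2 ≤ p + q) (h2 : p + r ≤ q + 1)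
    (f g : MvPolynomial (Fin 2) k)
    (hfg : (X 1 : MvPolynomial (Fin 2) k) ^ q = f * X 0 ^ p + g * (X 0 + X 1) ^ r)
    (hgsupp : ∀ m ∈ g.support, m 0 < p) :
    (Ideal.span {(X 0 : MvPolynomial (Fin 2) k) ^ p, X 1 ^ q}).colon
        (Ideal.span {(X 0 + X 1 : MvPolynomial (Fin 2) k) ^ r}) =
      Ideal.span {(X 0 : MvPolynomial (Fin 2) k) ^ p, g} ∧
    IsRelPrime ((X 0 : MvPolynomial (Fin 2) k) ^ p) g :=
  stmt_7_general k p q r hp f g hfg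
end

section
/- Let p, q, r, d be positive integers with d < p + q − r − 1, and let M = M(p,q,r,d) be the (p+q−r−d−1)×(d+1) matrix over ℚ with entries M_{i,j} = binomial(r, d+r−q+1+i−j). Suppose M_{s,t} ≠ 0 and k ≥ 0 satisfies s+k ≤ p+q−r−d−2 and t+k ≤ d. Then the (k+1)×(k+1) submatrix of M with entries {M_{i,j} : s ≤ i ≤ s+k, t ≤ j ≤ t+k} is invertible. -/
/-- `binomial r b` with the convention that it vanishes for `b < 0` (and for `b > r`,
which `Nat.choose` already handles). -/
def ichoose (r : ℕ) (b : ℤ) : ℤ := if b < 0 then 0 else r.choose b.toNat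

/-- Entries of the matrix `M(p,q,r,d)`: `M_{i,j} = binomial(r, d+r−q+1+i−j)` over `ℚ`. -/
noncomputable def Mentry (q r d : ℕ) (i j : ℕ) : ℚ :=
  (ichoose r ((d : ℤ) + r - q + 1 + i - j) : ℚ)

/-!
With `a = d + r - q + 1 + s - t`, the entry `M_{s+i,t+j} = binomial(r, a + i - j)` is the
coefficient of `X^(a+i)` in `(X + 1)^r * X^j`. A kernel vector of the submatrix is therefore
the coefficient vector of a nonzero `f` of degree `≤ k` such that `(X + 1)^r * f` vanishes in
the `k + 1` consecutive degrees `a, …, a + k`; as `M_{s,t} ≠ 0` means `0 ≤ a ≤ r`, this leaves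
it at most `r` nonzero coefficients. That is impossible: in characteristic zero a nonzero
multiple of `(X - b)^r` with `b ≠ 0` has more than `r` terms (strip the power of `X` dividing it and
differentiate, which lowers both the multiplicity of `b` and the number of terms).
-/

open Polynomial Finset

namespace Polynomial

lemma card_support_X_pow_mul {R : Type*} [Semiring R] (n : ℕ) (p : R[X]) :
    #(X ^ n * p).support = #p.support := by
  have : (X ^ n * p).support = p.support.map (addRightEmbedding n) := by
    ext m
    simp only [mem_support_iff, coeff_X_pow_mul', mem_map, addRightEmbedding_apply]
    constructor
    · intro h
      split_ifs at h with hnm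
      · exact ⟨m - n, h, Nat.sub_add_cancel hnm⟩
      · exact absurd rfl h
    · rintro ⟨k, hk, rfl⟩
      simpa using hk
  rw [this, card_map]

lemma card_support_derivative_lt {R : Type*} [Semiring R] [IsAddTorsionFree R] {p : R[X]}
    (hp : p.coeff 0 ≠ 0) : #(derivative p).support < #p.support := by
  have hsub : #(derivative p).support ≤ #(p.support.erase 0) :=
    card_le_card_of_injOn (· + 1)
      (fun n hn => mem_erase.mpr ⟨n.succ_ne_zero, mem_support_derivative.mp hn⟩)
      (fun _ _ _ _ h => Nat.succ_injective h)
  have h0 : 0 ∈ p.support := mem_support_iff.mpr hp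
  rw [card_erase_of_mem h0] at hsub
  have := card_pos.mpr ⟨0, h0⟩
  omega

variable {R : Type*} [CommRing R] [IsDomain R] [CharZero R]

theorem lt_card_support_of_X_sub_C_pow_dvd {a : R} (ha : a ≠ 0) :
    ∀ {m : ℕ} {p : R[X]}, p ≠ 0 → (X - C a) ^ m ∣ p → m < #p.support := by
  intro m
  induction m with
  | zero => exact fun hp _ => card_pos.mpr (support_nonempty.mpr hp)
  | succ m ih =>
    intro p hp hdvd
    obtain ⟨q, hpq, hXq⟩ := exists_eq_pow_rootMultiplicity_mul_and_not_dvd p hp 0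
    rw [C_0, sub_zero] at hpq hXq
    have hq0 : q.coeff 0 ≠ 0 := mt X_dvd_iff.mpr hXq
    have hqdvd : (X - C a) ^ (m + 1) ∣ q :=
      (prime_X_sub_C a).pow_dvd_of_dvd_mul_left _ (by simp [dvd_iff_isRoot, ha]) (hpq ▸ hdvd)
    have hq' : derivative q ≠ 0 := by
      intro h
      rw [eq_C_of_derivative_eq_zero h] at hqdvd
      have hroot := dvd_iff_isRoot.mp ((dvd_pow_self _ m.succ_ne_zero).trans hqdvd)
      exact hq0 (by simpa using hroot.eq_zero)
    have hm := ih hq' (by simpa using pow_sub_one_dvd_derivative_of_pow_dvd hqdvd)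
    rw [hpq, card_support_X_pow_mul]
    exact (Nat.succ_le_of_lt hm).trans_lt (card_support_derivative_lt hq0)

theorem exists_coeff_X_sub_C_pow_mul_ne_zero {b : R} (hb : b ≠ 0) {f : R[X]} (hf : f ≠ 0)
    {n r a : ℕ} (hfn : f.natDegree < n) (ha : a ≤ r) :
    ∃ i < n, ((X - C b) ^ r * f).coeff (a + i) ≠ 0 := by
  by_contra! hgap
  set g := (X - C b) ^ r * f
  have hg : g ≠ 0 := mul_ne_zero (pow_ne_zero _ (X_sub_C_ne_zero b)) hf
  have hdeg : g.natDegree < r + n := by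
    rw [natDegree_mul (pow_ne_zero _ (X_sub_C_ne_zero b)) hf, natDegree_pow, natDegree_X_sub_C]
    omega
  have hsupp : g.support ⊆ range a ∪ Ico (a + n) (r + n) := by
    intro k hk
    have hkg := le_natDegree_of_mem_supp k hk
    have : ¬ (a ≤ k ∧ k < a + n) := fun ⟨h₁, h₂⟩ =>
      mem_support_iff.mp hk (by simpa [Nat.add_sub_cancel' h₁] using hgap (k - a) (by omega))
    simp only [mem_union, mem_range, mem_Ico]
    omega
  have hcard : #g.support ≤ r :=
    calc #g.support ≤ #(range a ∪ Ico (a + n) (r + n)) := card_le_card hsupp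
      _ ≤ #(range a) + #(Ico (a + n) (r + n)) := card_union_le _ _
      _ ≤ r := by simp only [card_range, Nat.card_Ico]; omega
  exact (lt_card_support_of_X_sub_C_pow_dvd hb hg (dvd_mul_right _ _)).not_ge hcard

theorem det_coeff_X_sub_C_pow_mul_X_pow_ne_zero {b : R} (hb : b ≠ 0) {r a : ℕ} (ha : a ≤ r)
    (n : ℕ) :
    (Matrix.of fun i j : Fin n => ((X - C b) ^ r * X ^ (j : ℕ)).coeff (a + i)).det ≠ 0 := by
  classical
  intro hdet
  obtain ⟨v, hv, hMv⟩ := Matrix.exists_mulVec_eq_zero_iff.mpr hdet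
  set f : R[X] := ∑ j : Fin n, C (v j) * X ^ (j : ℕ)
  have hf : f ≠ 0 := fun hf => hv <| by
    ext j
    simpa [f, finsetSum_coeff, coeff_X_pow, Fin.val_inj] using congr_arg (coeff · (j : ℕ)) hf
  obtain ⟨i, hi, hne⟩ := exists_coeff_X_sub_C_pow_mul_ne_zero hb hf
    ((natDegree_lt_iff_degree_lt hf).mpr (degree_sum_fin_lt v)) ha
  apply hne
  have := congr_fun hMv ⟨i, hi⟩
  simp only [Matrix.mulVec, dotProduct, Matrix.of_apply] at this
  simp only [f, mul_sum, finsetSum_coeff, mul_left_comm _ (C _), coeff_C_mul]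
  simpa [mul_comm] using this

end Polynomial

lemma ichoose_ne_zero_iff {r : ℕ} {b : ℤ} : ichoose r b ≠ 0 ↔ 0 ≤ b ∧ b ≤ r := by
  unfold ichoose
  split_ifs with hb
  · simp [hb.not_ge]
  · rw [Nat.cast_ne_zero, Nat.choose_ne_zero_iff]
    omega

lemma ichoose_sub_eq_coeff {R : Type*} [CommRing R] (r n j : ℕ) :
    (ichoose r ((n : ℤ) - j) : R) = ((X + 1) ^ r * X ^ j).coeff n := by
  rw [coeff_mul_X_pow', ichoose]
  by_cases hjn : j ≤ n
  · rw [if_neg (by omega), if_pos hjn, coeff_X_add_one_pow,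
      show ((n : ℤ) - j).toNat = n - j by omega, Int.cast_natCast]
  · rw [if_pos (by omega), if_neg hjn, Int.cast_zero]

theorem stmt_11_general (q r d : ℕ) (s t K : ℕ) (hst : Mentry q r d s t ≠ 0) :
    (Matrix.of fun i j : Fin (K + 1) => Mentry q r d (s + i) (t + j)).det ≠ 0 := by
  obtain ⟨hc0, hcr⟩ := ichoose_ne_zero_iff.mp (Int.cast_ne_zero.mp hst)
  obtain ⟨a, ha⟩ := Int.eq_ofNat_of_zero_le hc0
  have hentry : ∀ i j : ℕ,
      Mentry q r d (s + i) (t + j) = ((X + 1) ^ r * X ^ j).coeff (a + i) := by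
    intro i j
    rw [Mentry, ← ichoose_sub_eq_coeff]
    push_cast
    congr 2
    omega
  simp_rw [hentry, show (X + 1 : ℚ[X]) = X - C (-1) by simp]
  exact det_coeff_X_sub_C_pow_mul_X_pow_ne_zero (by norm_num) (by omega) (K + 1)

/-- If `M(p,q,r,d)_{s,t} ≠ 0` and `s+k ≤ p+q−r−d−2`, `t+k ≤ d`, then the `(k+1)×(k+1)`
submatrix of `M(p,q,r,d)` with rows `s,…,s+k` and columns `t,…,t+k` is invertible. -/
theorem stmt_11 (p q r d : ℕ) (hp : 0 < p) (hq : 0 < q) (hr : 0 < r) (hd : 0 < d)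
    (hsize : d + r + 2 ≤ p + q)
    (s t K : ℕ) (hs : s + K + d + r + 2 ≤ p + q) (ht : t + K ≤ d)
    (hst : Mentry q r d s t ≠ 0) :
    (Matrix.of fun i j : Fin (K + 1) => Mentry q r d (s + i) (t + j)).det ≠ 0 :=
  stmt_11_general q r d s t K hst
end

section
/- Let a ≤ b and c ≤ d be positive integers, and in S = k[x,y,z] consider the monomial ideals J_1 = ⟨x^a⟩ + ⟨x^{a−i} z^{b−a+2i−1} : i = 1,...,a⟩ and J_2 = ⟨y^c⟩ + ⟨y^{c−j} z^{d−c+2j−1} : j = 1,...,c⟩. Set N = max{a+d−1, b+c−1}. Then every monomial of S of degree N lies in J_1 + J_2; i.e., (J_1 + J_2)_N = S_N. -/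
/-!
A monomial `x^p y^q z^r` lies in `L(a,b)` (in `x,z`) as soon as `p ≥ a` or `2p + r ≥ a + b - 1`:
for `p < a` it is divisible by the generator with `i = a - p`. If a monomial of degree `N`
satisfied neither this nor the analogous condition `q ≥ c` or `2q + r ≥ c + d - 1` for
`L(c,d)`, adding the two failed inequalities would give `2N ≤ a + b + c + d - 4`, whereas
`2N ≥ (a + d - 1) + (b + c - 1)`. Homogeneous polynomials follow monomial by monomial.
-/

open MvPolynomial

/-- The lex-segment ideal `L(a,b) = ⟨u^a, u^{a−1}v^{b−a+1}, …, u^{a−i}v^{b−a+2i−1}, …, v^{a+b−1}⟩`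
in the variables `X u₀` and `X v₀` of `k[x,y,z]`. -/
noncomputable def lexSeg (k : Type) [Field k] (u₀ v₀ : Fin 3) (a b : ℕ) : Ideal (MvPolynomial (Fin 3) k) :=
  Ideal.span ({monomial (Finsupp.single u₀ a) (1 : k)} ∪
    (fun i : ℕ => monomial (Finsupp.single u₀ (a - i) + Finsupp.single v₀ (b - a + 2 * i - 1))
      (1 : k)) '' Set.Icc 1 a)

section

variable {σ R : Type*} [CommSemiring R]

lemma monomial_one_mem_of_le {I : Ideal (MvPolynomial σ R)} {g m : σ →₀ ℕ}
    (hg : monomial g (1 : R) ∈ I) (h : g ≤ m) : monomial m (1 : R) ∈ I :=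
  Ideal.mem_of_dvd _ (monomial_dvd_monomial.2 ⟨Or.inr h, one_dvd _⟩) hg

lemma MvPolynomial.IsHomogeneous.mem_ideal_of_monomial_mem {I : Ideal (MvPolynomial σ R)}
    {n : ℕ} (hI : ∀ m : σ →₀ ℕ, m.degree = n → monomial m (1 : R) ∈ I)
    {f : MvPolynomial σ R} (hf : f.IsHomogeneous n) : f ∈ I := by
  rw [f.as_sum]
  refine Ideal.sum_mem _ fun m hm => ?_
  have hdeg : m.degree = n := by
    rw [Finsupp.degree_eq_weight_one]
    exact hf (mem_support_iff.1 hm)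
  rw [← mul_one (coeff m f), ← C_mul_monomial]
  exact Ideal.mul_mem_left _ _ (hI m hdeg)

end

lemma monomial_mem_lexSeg {k : Type} [Field k] {u₀ v₀ : Fin 3} {a b : ℕ} (huv : u₀ ≠ v₀)
    (hab : a ≤ b) {m : Fin 3 →₀ ℕ} (h : a ≤ m u₀ ∨ a + b ≤ 2 * m u₀ + m v₀ + 1) :
    monomial m (1 : k) ∈ lexSeg k u₀ v₀ a b := by
  rcases le_or_gt a (m u₀) with hp | hp
  · exact monomial_one_mem_of_le (Ideal.subset_span (Or.inl rfl)) (Finsupp.single_le_iff.2 hp)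
  · refine monomial_one_mem_of_le
      (Ideal.subset_span (Or.inr ⟨a - m u₀, ⟨by omega, by omega⟩, rfl⟩)) fun s => ?_
    simp only [Finsupp.coe_add, Pi.add_apply, Finsupp.single_apply]
    split_ifs <;> subst_vars <;> first | contradiction | omega

theorem stmt_13_general (k : Type) [Field k] (a b c d : ℕ)
    (hab : a ≤ b) (hcd : c ≤ d)
    (N : ℕ) (hN : N = max (a + d - 1) (b + c - 1)) :
    (∀ m : Fin 3 →₀ ℕ, (∑ i, m i) = N →
      monomial m (1 : k) ∈ lexSeg k 0 2 a b ⊔ lexSeg k 1 2 c d) ∧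
    (∀ f : MvPolynomial (Fin 3) k, f.IsHomogeneous N →
      f ∈ lexSeg k 0 2 a b ⊔ lexSeg k 1 2 c d) := by
  have hmonomial : ∀ m : Fin 3 →₀ ℕ, (∑ i, m i) = N →
      monomial m (1 : k) ∈ lexSeg k 0 2 a b ⊔ lexSeg k 1 2 c d := by
    intro m hm
    rw [Fin.sum_univ_three] at hm
    have hsplit : (a ≤ m 0 ∨ a + b ≤ 2 * m 0 + m 2 + 1) ∨ (c ≤ m 1 ∨ c + d ≤ 2 * m 1 + m 2 + 1) := by
      omega
    rcases hsplit with h | h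
    · exact Ideal.mem_sup_left (monomial_mem_lexSeg (by decide) hab h)
    · exact Ideal.mem_sup_right (monomial_mem_lexSeg (by decide) hcd h)
  refine ⟨hmonomial, fun f hf => hf.mem_ideal_of_monomial_mem fun m hm => hmonomial m ?_⟩
  rwa [← Finsupp.degree_eq_sum]

/-- For `J₁ = L(a,b)` in `x,z` and `J₂ = L(c,d)` in `y,z`, every monomial of degree
`N = max{a+d−1, b+c−1}` lies in `J₁ + J₂`; i.e. `(J₁+J₂)_N = S_N`. -/
theorem stmt_13 (k : Type) [Field k] (a b c d : ℕ)
    (ha : 0 < a) (hc : 0 < c) (hab : a ≤ b) (hcd : c ≤ d)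
    (N : ℕ) (hN : N = max (a + d - 1) (b + c - 1)) :
    (∀ m : Fin 3 →₀ ℕ, (∑ i, m i) = N →
      monomial m (1 : k) ∈ lexSeg k 0 2 a b ⊔ lexSeg k 1 2 c d) ∧
    (∀ f : MvPolynomial (Fin 3) k, f.IsHomogeneous N →
      f ∈ lexSeg k 0 2 a b ⊔ lexSeg k 1 2 c d) :=
  stmt_13_general k a b c d hab hcd N hN
end

section
/- Let p, q, r, d be positive integers and f = Σ_{i+j=d} a_{ij} s^i t^j a homogeneous polynomial of degree d in k[s,t]. Then f·(s+t)^r ∈ ⟨s^p, t^q⟩ if and only if for every u with d+r−q+1 ≤ u ≤ p−1, the linear condition Σ_{m+i=u, 0≤m≤r, 0≤i≤d} binomial(r,m) a_{i,d−i} = 0 holds. -/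
/-!
`g = f·(s+t)^r` is homogeneous of degree `d+r`, so it lies in the monomial ideal `⟨s^p, t^q⟩`
exactly when the coefficient of `s^u t^(d+r-u)` vanishes whenever `u < p` and `d+r-u < q`.
Expanding `(s+t)^r` binomially, that coefficient is `Σ_i binomial(r, u-i)·a_{i,d-i}`;
for `u > d+r` the same sum vanishes trivially, so no upper bound on `u` is needed.
-/

open MvPolynomial

lemma ichoose_natCast_sub_of_le (r : ℕ) {u i : ℕ} (h : i ≤ u) :
    ichoose r ((u : ℤ) - i) = r.choose (u - i) := by
  rw [ichoose, if_neg (by omega), ← Nat.cast_sub h, Int.toNat_natCast]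

lemma ichoose_natCast_sub_of_lt (r : ℕ) {u i : ℕ} (h : u < i) : ichoose r ((u : ℤ) - i) = 0 :=
  if_pos (by omega)

open Finset in
lemma sum_ichoose_mul_eq_zero_of_lt {R : Type*} [Ring R] {r d u : ℕ} (h : d + r < u)
    (a : ℕ → R) : ∑ i ∈ range (d + 1), (ichoose r ((u : ℤ) - i) : R) * a i = 0 :=
  sum_eq_zero fun i hi => by
    simp only [mem_range] at hi
    rw [ichoose_natCast_sub_of_le r (by omega), Nat.choose_eq_zero_of_lt (by omega), Nat.cast_zero,
      Int.cast_zero, zero_mul]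

namespace Finsupp

lemma forall_fin_two_iff {P : (Fin 2 →₀ ℕ) → Prop} :
    (∀ e, P e) ↔ ∀ a b, P (single 0 a + single 1 b) := by
  refine ⟨fun h a b => h _, fun h e => ?_⟩
  convert h (e 0) (e 1)
  ext x; fin_cases x <;> simp

lemma single_zero_add_single_one_inj {a b a' b' : ℕ} :
    (single (0 : Fin 2) a + single 1 b = single 0 a' + single 1 b') ↔ a = a' ∧ b = b' := by
  refine ⟨fun h => ⟨by simpa using congr($h 0), by simpa using congr($h 1)⟩, ?_⟩
  rintro ⟨rfl, rfl⟩
  rfl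

lemma single_zero_add_single_one_le_iff {a b a' b' : ℕ} :
    (single (0 : Fin 2) a + single 1 b ≤ single 0 a' + single 1 b') ↔ a ≤ a' ∧ b ≤ b' := by
  refine ⟨fun h => ⟨by simpa using h 0, by simpa using h 1⟩, ?_⟩
  rintro ⟨ha, hb⟩ x
  fin_cases x <;> simpa

lemma single_zero_add_single_one_tsub (a b a' b' : ℕ) :
    single (0 : Fin 2) a' + single 1 b' - (single 0 a + single 1 b) =
      single 0 (a' - a) + single 1 (b' - b) := by
  ext x; fin_cases x <;> simp

end Finsupp

namespace MvPolynomial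

open Finset Finsupp

section CommSemiring

variable {R : Type*} [CommSemiring R]

theorem IsHomogeneous.eq_sum_monomial_fin_two {f : MvPolynomial (Fin 2) R} {d : ℕ}
    (hf : f.IsHomogeneous d) :
    f = ∑ i ∈ range (d + 1),
      monomial (single 0 i + single 1 (d - i)) (coeff (single 0 i + single 1 (d - i)) f) := by
  refine ext _ _ (forall_fin_two_iff.mpr fun a b => ?_)
  simp only [coeff_sum, coeff_monomial, single_zero_add_single_one_inj]
  by_cases hab : a + b = d
  · rw [Finset.sum_eq_single a (fun i _ hi => if_neg fun h => hi h.1)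
      (fun ha => by rw [mem_range] at ha; omega), if_pos ⟨rfl, by omega⟩, show d - a = b by omega]
  · rw [hf.coeff_eq_zero (by simpa), eq_comm]
    exact sum_eq_zero fun i hi => if_neg fun h => hab (by rw [mem_range] at hi; omega)

theorem coeff_X_zero_add_X_one_pow {r a b : ℕ} (h : a + b = r) :
    coeff (single 0 a + single 1 b) ((X 0 + X 1 : MvPolynomial (Fin 2) R) ^ r) = r.choose a := by
  have hterm (m : ℕ) :
      (X 0 : MvPolynomial (Fin 2) R) ^ m * X 1 ^ (r - m) * (r.choose m : MvPolynomial (Fin 2) R) =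
        monomial (single 0 m + single 1 (r - m)) (r.choose m : R) := by
    rw [X_pow_eq_monomial, X_pow_eq_monomial, monomial_mul, mul_one, ← C_eq_coe_nat,
      mul_comm, C_mul_monomial, mul_one]
  simp only [add_pow, hterm, coeff_sum, coeff_monomial, single_zero_add_single_one_inj]
  rw [Finset.sum_eq_single a (fun i _ hi => if_neg fun h => hi h.1)
    (fun ha => by rw [mem_range] at ha; omega), if_pos ⟨rfl, by omega⟩]

theorem mem_span_X_zero_pow_X_one_pow_iff {g : MvPolynomial (Fin 2) R} {p q : ℕ} :
    g ∈ Ideal.span {(X 0 : MvPolynomial (Fin 2) R) ^ p, X 1 ^ q} ↔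
      ∀ a b, coeff (single 0 a + single 1 b) g ≠ 0 → p ≤ a ∨ q ≤ b := by
  have hspan : ({X 0 ^ p, X 1 ^ q} : Set (MvPolynomial (Fin 2) R)) =
      (fun s => monomial s (1 : R)) '' {single 0 p, single 1 q} := by
    rw [Set.image_insert_eq, Set.image_singleton, X_pow_eq_monomial, X_pow_eq_monomial]
  rw [hspan, mem_ideal_span_monomial_image]
  simp only [mem_support_iff, forall_fin_two_iff (P := fun e => coeff e g ≠ 0 → _)]
  simp [single_le_iff]

end CommSemiring

section CommRing

variable {R : Type*} [CommRing R]

theorem coeff_monomial_mul_X_zero_add_X_one_pow {r a b u v : ℕ} (c : R) (h : u + v = a + b + r) :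
    coeff (single 0 u + single 1 v)
      (monomial (single 0 a + single 1 b) c * (X 0 + X 1 : MvPolynomial (Fin 2) R) ^ r) =
      c * ichoose r ((u : ℤ) - a) := by
  simp only [coeff_monomial_mul', single_zero_add_single_one_le_iff]
  by_cases hau : a ≤ u
  · rw [ichoose_natCast_sub_of_le r hau]
    by_cases hbv : b ≤ v
    · rw [if_pos ⟨hau, hbv⟩, single_zero_add_single_one_tsub,
        coeff_X_zero_add_X_one_pow (by omega), Int.cast_natCast]
    · rw [if_neg fun h => hbv h.2, Nat.choose_eq_zero_of_lt (by omega), Nat.cast_zero,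
        Int.cast_zero, mul_zero]
  · rw [if_neg fun h => hau h.1, ichoose_natCast_sub_of_lt r (by omega), Int.cast_zero, mul_zero]

theorem IsHomogeneous.coeff_mul_X_zero_add_X_one_pow {f : MvPolynomial (Fin 2) R} {d r u v : ℕ}
    (hf : f.IsHomogeneous d) (h : u + v = d + r) :
    coeff (single 0 u + single 1 v) (f * (X 0 + X 1) ^ r) =
      ∑ i ∈ range (d + 1),
        (ichoose r ((u : ℤ) - i) : R) * coeff (single 0 i + single 1 (d - i)) f := by
  conv_lhs => rw [hf.eq_sum_monomial_fin_two]
  rw [Finset.sum_mul, coeff_sum]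
  refine Finset.sum_congr rfl fun i hi => ?_
  rw [coeff_monomial_mul_X_zero_add_X_one_pow _ (by rw [mem_range] at hi; omega), mul_comm]

end CommRing

end MvPolynomial

theorem stmt_19_general (k : Type) [Field k] (p q r d : ℕ)
    (f : MvPolynomial (Fin 2) k) (hf : f.IsHomogeneous d) :
    f * (X 0 + X 1) ^ r ∈ Ideal.span {(X 0 : MvPolynomial (Fin 2) k) ^ p, X 1 ^ q} ↔
      ∀ u : ℕ, (d : ℤ) + r - q + 1 ≤ u → u + 1 ≤ p →
        ∑ i ∈ Finset.range (d + 1),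
          (ichoose r ((u : ℤ) - i) : k) *
            f.coeff (Finsupp.single 0 i + Finsupp.single 1 (d - i)) = 0 := by
  have hg : (f * (X 0 + X 1) ^ r).IsHomogeneous (d + r) :=
    hf.mul (by simpa using ((isHomogeneous_X k 0).add (isHomogeneous_X k 1)).pow r)
  rw [mem_span_X_zero_pow_X_one_pow_iff]
  constructor
  · intro h u hqu hup
    rcases le_or_gt u (d + r) with hu | hu
    · rw [← hf.coeff_mul_X_zero_add_X_one_pow (Nat.add_sub_cancel' hu)]
      by_contra hne
      have := h _ _ hne
      omega
    · exact sum_ichoose_mul_eq_zero_of_lt hu _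
  · intro h a b hne
    have hab : a + b = d + r := by
      by_contra hab
      exact hne (hg.coeff_eq_zero (by simpa))
    by_contra! hlt
    exact hne (by rw [hf.coeff_mul_X_zero_add_X_one_pow hab]; exact h a (by omega) (by omega))

/-- For a homogeneous `f = Σ_{i+j=d} a_{ij} s^i t^j` of degree `d` in `k[s,t]` (char 0),
`f·(s+t)^r ∈ ⟨s^p, t^q⟩` iff for every `u` with `d+r−q+1 ≤ u ≤ p−1` the linear condition
`Σ_{m+i=u} binomial(r,m)·a_{i,d−i} = 0` holds. -/
theorem stmt_19 (k : Type) [Field k] [CharZero k] (p q r d : ℕ)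
    (hp : 0 < p) (hq : 0 < q) (hr : 0 < r) (hd : 0 < d)
    (f : MvPolynomial (Fin 2) k) (hf : f.IsHomogeneous d) :
    f * (X 0 + X 1) ^ r ∈ Ideal.span {(X 0 : MvPolynomial (Fin 2) k) ^ p, X 1 ^ q} ↔
      ∀ u : ℕ, (d : ℤ) + r - q + 1 ≤ u → u + 1 ≤ p →
        ∑ i ∈ Finset.range (d + 1),
          (ichoose r ((u : ℤ) - i) : k) *
            f.coeff (Finsupp.single 0 i + Finsupp.single 1 (d - i)) = 0 :=
  stmt_19_general k p q r d f hf
end
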